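/- arXiv:2303.17679 — 10 statements merged into one kernel-verified Lean document; each statement's English description precedes it below -/
import Mathlib

section
/- Let H be a weighted hypergraph, Π a k-way partition of H, u a node with s = Π(u), and t ≠ s a block. Let Π' be the partition obtained from Π by moving u to t. Then the decrease of the connectivity metric equals the gain of the move: conn(Π) − conn(Π') = Σ_{e ∈ I(u) with Φ_Π(e, s) = 1} ω(e) − Σ_{e ∈ I(u) with Φ_Π(e, t) = 0} ω(e). -/
open Finset

variable {V ι : Type*} [DecidableEq V] [DecidableEq ι]

/-- The pin count `Φ_Π(e, i)`: the number of pins of net `e` assigned to block `i`. -/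
def pinCount {k : ℕ} (pins : ι → Finset V) (P : V → Fin k) (e : ι) (i : Fin k) : ℕ :=
  ((pins e).filter fun v => P v = i).card

/-- The connectivity `λ_Π(e)`: the number of blocks spanned by net `e`. -/
def lambdaConn {k : ℕ} (pins : ι → Finset V) (P : V → Fin k) (e : ι) : ℕ :=
  ((pins e).image P).card

/-- The connectivity metric `conn(Π) = Σ_e (λ_Π(e) − 1)·ω(e)`. -/
noncomputable def connMetric {k : ℕ} (E : Finset ι) (pins : ι → Finset V) (ω : ι → ℝ)
    (P : V → Fin k) : ℝ :=
  ∑ e ∈ E, ((lambdaConn pins P e : ℝ) - 1) * ω e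

lemma key_lambda {k : ℕ} (pins : ι → Finset V) (P : V → Fin k) (u : V) (t : Fin k)
    (hts : t ≠ P u) (e : ι) :
    (lambdaConn pins P e : ℝ) - lambdaConn pins (Function.update P u t) e =
      (if u ∈ pins e ∧ pinCount pins P e (P u) = 1 then (1:ℝ) else 0) -
      (if u ∈ pins e ∧ pinCount pins P e t = 0 then (1:ℝ) else 0) := by
  by_cases hu : u ∈ pins e
  · have herase : ((pins e).erase u).image (Function.update P u t) =
        ((pins e).erase u).image P := by
      apply Finset.image_congr
      intro v hv
      exact Function.update_of_ne (Finset.ne_of_mem_erase hv) _ _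
    set S := ((pins e).erase u).image P with hS
    have h1 : (pins e).image P = insert (P u) S := by
      conv_lhs => rw [← Finset.insert_erase hu]
      rw [Finset.image_insert]
    have h2 : (pins e).image (Function.update P u t) = insert t S := by
      conv_lhs => rw [← Finset.insert_erase hu]
      rw [Finset.image_insert, herase, Function.update_self]
    have hsS : pinCount pins P e (P u) = 1 ↔ P u ∉ S := by
      unfold pinCount
      constructor
      · intro h hmem
        obtain ⟨v, hv, hPv⟩ := Finset.mem_image.mp hmem
        have hvF : v ∈ (pins e).filter (fun w => P w = P u) :=
          Finset.mem_filter.mpr ⟨Finset.mem_of_mem_erase hv, hPv⟩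
        have huF : u ∈ (pins e).filter (fun w => P w = P u) :=
          Finset.mem_filter.mpr ⟨hu, rfl⟩
        obtain ⟨a, ha⟩ := Finset.card_eq_one.mp h
        rw [ha, Finset.mem_singleton] at hvF huF
        exact (Finset.ne_of_mem_erase hv) (hvF.trans huF.symm)
      · intro h
        have hsingle : (pins e).filter (fun w => P w = P u) = {u} := by
          apply Finset.eq_singleton_iff_unique_mem.mpr
          refine ⟨Finset.mem_filter.mpr ⟨hu, rfl⟩, ?_⟩
          intro v hv
          by_contra hvu
          exact h (Finset.mem_image.mpr ⟨v,
            Finset.mem_erase.mpr ⟨hvu, (Finset.mem_filter.mp hv).1⟩,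
            (Finset.mem_filter.mp hv).2⟩)
        rw [hsingle, Finset.card_singleton]
    have htS : pinCount pins P e t = 0 ↔ t ∉ S := by
      unfold pinCount
      rw [Finset.card_eq_zero, Finset.filter_eq_empty_iff]
      constructor
      · intro h hmem
        obtain ⟨v, hv, hPv⟩ := Finset.mem_image.mp hmem
        exact h (Finset.mem_of_mem_erase hv) hPv
      · intro h v hv hPv
        have hvu : v ≠ u := by
          intro hvu; rw [hvu] at hPv; exact hts hPv.symm
        exact h (Finset.mem_image.mpr ⟨v, Finset.mem_erase.mpr ⟨hvu, hv⟩, hPv⟩)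
    unfold lambdaConn
    rw [h1, h2, Finset.card_insert_eq_ite, Finset.card_insert_eq_ite]
    by_cases hs : P u ∈ S <;> by_cases ht : t ∈ S <;>
      simp [hs, ht, hu, hsS, htS] <;> push_cast <;> ring
  · have : (pins e).image (Function.update P u t) = (pins e).image P := by
      apply Finset.image_congr
      intro v hv
      refine Function.update_of_ne (fun hvu => hu ?_) _ _
      rw [← hvu]; exact hv
    unfold lambdaConn
    rw [this]
    simp [hu]

/-- Moving node `u` from its block `s = Π(u)` to a block `t ≠ s` decreases the
connectivity metric by exactly the gain
`Σ_{e ∈ I(u), Φ_Π(e,s)=1} ω(e) − Σ_{e ∈ I(u), Φ_Π(e,t)=0} ω(e)`. -/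
theorem stmt0 {k : ℕ} (E : Finset ι) (pins : ι → Finset V) (c : V → ℝ) (ω : ι → ℝ)
    (hne : ∀ e ∈ E, (pins e).Nonempty) (hω : ∀ e ∈ E, 0 < ω e) (hc : ∀ v, 0 < c v)
    (P : V → Fin k) (u : V) (t : Fin k) (hts : t ≠ P u) :
    connMetric E pins ω P - connMetric E pins ω (Function.update P u t) =
      (∑ e ∈ E.filter (fun e => u ∈ pins e ∧ pinCount pins P e (P u) = 1), ω e) -
      (∑ e ∈ E.filter (fun e => u ∈ pins e ∧ pinCount pins P e t = 0), ω e) := by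
  unfold connMetric
  rw [← Finset.sum_sub_distrib, Finset.sum_filter, Finset.sum_filter,
    ← Finset.sum_sub_distrib]
  apply Finset.sum_congr rfl
  intro e _
  have hk := key_lambda pins P u t hts e
  have : ((lambdaConn pins P e : ℝ) - 1) * ω e -
      ((lambdaConn pins (Function.update P u t) e : ℝ) - 1) * ω e =
      ((lambdaConn pins P e : ℝ) - lambdaConn pins (Function.update P u t) e) * ω e := by
    ring
  rw [this, hk]
  split_ifs <;> ring
end

section
/- Let M = ⟨m_1, …, m_l⟩ be a move sequence starting from a partition Π_0 of a weighted hypergraph H in which each node is moved at most once. Then for every net e ∈ E, the number of indices i such that u_i ∈ e and Φ_{Π_i}(e, s_i) = 0 (i.e., the move m_i reduces the pin count of e in its source block to zero) is at most min(k, |e|). -/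
open Finset

variable {V ι : Type*} [DecidableEq V] [DecidableEq ι]

/-- `applyMoves P0 mv j` is the partition `Π_j` obtained from `Π_0 = P0` after applying the
first `j` moves, where move number `j` (0-based) is `mv j = (u_j, s_j, t_j)` and moves node
`u_j` to block `t_j`. -/
def applyMoves {k : ℕ} (P0 : V → Fin k) (mv : ℕ → V × Fin k × Fin k) : ℕ → V → Fin k
  | 0 => P0
  | j + 1 => Function.update (applyMoves P0 mv j) (mv j).1 (mv j).2.2

/-- If no move with index in `[a, b)` moves node `u`, then the block of `u` is the same
after `b` moves as after `a` moves. -/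
lemma applyMoves_stable {k : ℕ} (P0 : V → Fin k) (mv : ℕ → V × Fin k × Fin k) (u : V) :
    ∀ a b, a ≤ b → (∀ j, a ≤ j → j < b → (mv j).1 ≠ u) →
      applyMoves P0 mv b u = applyMoves P0 mv a u := by
  intro a b
  induction b with
  | zero => intro hab _; simp [Nat.le_zero.mp hab]
  | succ b ih =>
    intro hab hno
    by_cases hab' : a = b + 1
    · simp [hab']
    · have hab2 : a ≤ b := Nat.lt_succ_iff.mp (lt_of_le_of_ne hab hab')
      have hne : (mv b).1 ≠ u := hno b hab2 (Nat.lt_succ_self b)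
      have : applyMoves P0 mv (b + 1) u = applyMoves P0 mv b u := by
        simp [applyMoves, Function.update_of_ne (Ne.symm hne)]
      rw [this]
      exact ih hab2 (fun j hj1 hj2 => hno j hj1 (Nat.lt_succ_of_lt hj2))

/-- In a move sequence in which each node is moved at most once, for every net
`e ∈ E` the number of moves `m_i` with `u_i ∈ e` that reduce the pin count of `e` in their source
block to zero (i.e. `Φ_{Π_i}(e, s_i) = 0`) is at most `min(k, |e|)`. -/
theorem stmt2 {k : ℕ} (E : Finset ι) (pins : ι → Finset V) (c : V → ℝ) (ω : ι → ℝ)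
    (hne : ∀ e ∈ E, (pins e).Nonempty) (hω : ∀ e ∈ E, 0 < ω e) (hc : ∀ v, 0 < c v)
    (P0 : V → Fin k) (l : ℕ) (mv : ℕ → V × Fin k × Fin k)
    (hsrc : ∀ j < l, (mv j).2.1 = applyMoves P0 mv j (mv j).1)
    (htgt : ∀ j < l, (mv j).2.2 ≠ (mv j).2.1)
    (hdist : ∀ j₁ < l, ∀ j₂ < l, j₁ ≠ j₂ → (mv j₁).1 ≠ (mv j₂).1) :
    ∀ e ∈ E,
      ((Finset.range l).filter (fun j => (mv j).1 ∈ pins e ∧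
          pinCount pins (applyMoves P0 mv (j + 1)) e (mv j).2.1 = 0)).card ≤
        min k (pins e).card := by
  intro e he
  set S := (Finset.range l).filter (fun j => (mv j).1 ∈ pins e ∧
      pinCount pins (applyMoves P0 mv (j + 1)) e (mv j).2.1 = 0) with hS
  have hmem : ∀ j ∈ S, j < l ∧ (mv j).1 ∈ pins e ∧
      ∀ v ∈ pins e, applyMoves P0 mv (j + 1) v ≠ (mv j).2.1 := by
    intro j hj
    rw [hS, Finset.mem_filter, Finset.mem_range] at hj
    obtain ⟨h1, h2, h3⟩ := hj
    refine ⟨h1, h2, ?_⟩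
    intro v hv
    unfold pinCount at h3
    rw [Finset.card_eq_zero, Finset.filter_eq_empty_iff] at h3
    exact h3 hv
  refine le_min ?_ ?_
  · -- bound by k: source blocks are pairwise distinct
    have key : ∀ j₁ ∈ S, ∀ j₂ ∈ S, j₁ < j₂ → (mv j₁).2.1 ≠ (mv j₂).2.1 := by
      intro j₁ hj₁ j₂ hj₂ hlt heq
      obtain ⟨hl1, _, hzero1⟩ := hmem j₁ hj₁
      obtain ⟨hl2, hu2, _⟩ := hmem j₂ hj₂
      -- after move j₁, node (mv j₂).1 is not in block s, but it is at time j₂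
      have h1 : applyMoves P0 mv (j₁ + 1) (mv j₂).1 ≠ (mv j₂).2.1 := by
        rw [← heq]; exact hzero1 _ hu2
      have h2 : applyMoves P0 mv j₂ (mv j₂).1 = (mv j₂).2.1 := (hsrc j₂ hl2).symm
      -- hence some move in [j₁+1, j₂) moves node (mv j₂).1 — contradicting distinctness
      by_cases hall : ∀ j, j₁ + 1 ≤ j → j < j₂ → (mv j).1 ≠ (mv j₂).1
      · have := applyMoves_stable P0 mv (mv j₂).1 (j₁ + 1) j₂ hlt hall
        rw [this] at h2
        exact h1 h2
      · push_neg at hall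
        obtain ⟨j, _, hjlt, hjeq⟩ := hall
        exact hdist j (hjlt.trans hl2) j₂ hl2 (Nat.ne_of_lt hjlt) hjeq
    calc S.card ≤ (Finset.univ : Finset (Fin k)).card := by
          apply Finset.card_le_card_of_injOn (fun j => (mv j).2.1)
            (fun _ _ => Finset.mem_univ _)
          intro j₁ hj₁ j₂ hj₂ heq
          by_contra hne'
          rcases lt_or_gt_of_ne hne' with h | h
          · exact key j₁ hj₁ j₂ hj₂ h heq
          · exact key j₂ hj₂ j₁ hj₁ h heq.symm
      _ = k := by simp
  · -- bound by |e|: moved nodes are distinct and all in pins e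
    apply Finset.card_le_card_of_injOn (fun j => (mv j).1)
    · intro j hj; exact (hmem j hj).2.1
    · intro j₁ hj₁ j₂ hj₂ heq
      by_contra hne'
      exact hdist j₁ (hmem j₁ hj₁).1 j₂ (hmem j₂ hj₂).1 hne' heq
end

section
/- Let M = ⟨m_1, …, m_l⟩ be a move sequence starting from a partition Π_0 of a weighted hypergraph H in which each node is moved at most once. Then for every net e ∈ E, the number of indices i such that u_i ∈ e and Φ_{Π_i}(e, t_i) = 1 (i.e., the move m_i increases the pin count of e in its target block from zero to one) is at most min(k, |e|). -/
/-!
Since every node moves at most once, a node moved at step `j` still sits in its target block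
`t_j` at every later time. If two counted moves `j₁ < j₂` of pins of `e` had the same target
block `t`, then right after step `j₂` both moved nodes would be pins of `e` in block `t`,
contradicting `Φ(e, t) = 1`. So counted moves have pairwise distinct targets (at most `k` of
them) and pairwise distinct moved nodes, all pins of `e` (at most `|e|` of them).
-/

open Finset

variable {V ι : Type*} [DecidableEq V] [DecidableEq ι]

section MoveSequence

omit [DecidableEq ι]

omit [DecidableEq V] in
theorem eq_of_pinCount_eq_one {k : ℕ} {pins : ι → Finset V} {P : V → Fin k} {e : ι}
    {b : Fin k} (h : pinCount pins P e b = 1) {u w : V} (hu : u ∈ pins e) (hw : w ∈ pins e)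
    (hPu : P u = b) (hPw : P w = b) : u = w :=
  card_le_one.mp h.le u (mem_filter.mpr ⟨hu, hPu⟩) w (mem_filter.mpr ⟨hw, hPw⟩)

theorem applyMoves_succ_self {k : ℕ} (P0 : V → Fin k) (mv : ℕ → V × Fin k × Fin k) (j : ℕ) :
    applyMoves P0 mv (j + 1) (mv j).1 = (mv j).2.2 := by
  simp [applyMoves]

variable {k : ℕ} {P0 : V → Fin k} {mv : ℕ → V × Fin k × Fin k} {l : ℕ}

theorem applyMoves_eq_of_forall_ne {v : V} {n m : ℕ} (hnm : n ≤ m)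
    (hv : ∀ i, n ≤ i → i < m → (mv i).1 ≠ v) :
    applyMoves P0 mv m v = applyMoves P0 mv n v := by
  induction m, hnm using Nat.le_induction with
  | base => rfl
  | succ m hnm ih =>
    rw [applyMoves, Function.update_of_ne (hv m hnm m.lt_succ_self).symm]
    exact ih fun i hni him => hv i hni (him.trans m.lt_succ_self)

theorem applyMoves_moved_of_injOn (hinj : Set.InjOn (fun j => (mv j).1) (Set.Iio l))
    {j m : ℕ} (hjm : j < m) (hml : m ≤ l) : applyMoves P0 mv m (mv j).1 = (mv j).2.2 := by
  rw [applyMoves_eq_of_forall_ne hjm, applyMoves_succ_self]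
  intro i hji him hi
  have : i = j := hinj (show i < l by omega) (show j < l by omega) hi
  omega

/-- The indices `j < l` such that move `j` moves a pin of `e` into a block of `e` that was
empty, i.e. `Φ_{Π_{j+1}}(e, t_j) = 1`. -/
def connectingMoves (pins : ι → Finset V) (P0 : V → Fin k) (mv : ℕ → V × Fin k × Fin k)
    (l : ℕ) (e : ι) : Finset ℕ :=
  (range l).filter fun j => (mv j).1 ∈ pins e ∧
    pinCount pins (applyMoves P0 mv (j + 1)) e (mv j).2.2 = 1

variable {pins : ι → Finset V}

theorem injOn_target_connectingMoves (hinj : Set.InjOn (fun j => (mv j).1) (Set.Iio l))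
    (e : ι) : Set.InjOn (fun j => (mv j).2.2) (connectingMoves pins P0 mv l e) := by
  suffices key : ∀ j₁ ∈ connectingMoves pins P0 mv l e, ∀ j₂ ∈ connectingMoves pins P0 mv l e,
      j₁ < j₂ → (mv j₁).2.2 ≠ (mv j₂).2.2 by
    intro j₁ h₁ j₂ h₂ htgt
    rcases lt_trichotomy j₁ j₂ with hlt | heq | hgt
    · exact absurd htgt (key j₁ h₁ j₂ h₂ hlt)
    · exact heq
    · exact absurd htgt.symm (key j₂ h₂ j₁ h₁ hgt)
  intro j₁ h₁ j₂ h₂ hlt htgt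
  simp only [connectingMoves, mem_filter, mem_range] at h₁ h₂
  obtain ⟨hj₁l, hu₁, -⟩ := h₁
  obtain ⟨hj₂l, hu₂, hpin⟩ := h₂
  have hstay : applyMoves P0 mv (j₂ + 1) (mv j₁).1 = (mv j₂).2.2 :=
    htgt ▸ applyMoves_moved_of_injOn hinj (by omega) hj₂l
  have hsame : (mv j₁).1 = (mv j₂).1 :=
    eq_of_pinCount_eq_one hpin hu₁ hu₂ hstay (applyMoves_succ_self P0 mv j₂)
  exact hlt.ne (hinj hj₁l hj₂l hsame)

theorem card_connectingMoves_le (hinj : Set.InjOn (fun j => (mv j).1) (Set.Iio l)) (e : ι) :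
    (connectingMoves pins P0 mv l e).card ≤ k :=
  (card_le_card_of_injOn _ (fun _ _ => mem_univ _)
    (injOn_target_connectingMoves hinj e)).trans_eq (card_fin k)

theorem card_connectingMoves_le_card_pins (hinj : Set.InjOn (fun j => (mv j).1) (Set.Iio l))
    (e : ι) : (connectingMoves pins P0 mv l e).card ≤ (pins e).card :=
  card_le_card_of_injOn (fun j => (mv j).1) (fun _ hj => (mem_filter.mp hj).2.1)
    (hinj.mono fun _ hj => mem_range.mp (mem_filter.mp hj).1)

end MoveSequence

theorem stmt3_general {k : ℕ} (E : Finset ι) (pins : ι → Finset V)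
    (P0 : V → Fin k) (l : ℕ) (mv : ℕ → V × Fin k × Fin k)
    (hdist : ∀ j₁ < l, ∀ j₂ < l, j₁ ≠ j₂ → (mv j₁).1 ≠ (mv j₂).1) :
    ∀ e ∈ E,
      ((Finset.range l).filter (fun j => (mv j).1 ∈ pins e ∧
          pinCount pins (applyMoves P0 mv (j + 1)) e (mv j).2.2 = 1)).card ≤
        min k (pins e).card := by
  have hinj : Set.InjOn (fun j => (mv j).1) (Set.Iio l) := fun j₁ h₁ j₂ h₂ h =>
    by_contra fun hne => hdist j₁ h₁ j₂ h₂ hne h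
  intro e _
  exact le_min (card_connectingMoves_le hinj e) (card_connectingMoves_le_card_pins hinj e)

/-- In a move sequence in which each node is moved at most once, for every net
`e ∈ E` the number of moves `m_i` with `u_i ∈ e` that increase the pin count of `e` in their
target block from zero to one (i.e. `Φ_{Π_i}(e, t_i) = 1`) is at most `min(k, |e|)`. -/
theorem stmt3 {k : ℕ} (E : Finset ι) (pins : ι → Finset V) (c : V → ℝ) (ω : ι → ℝ)
    (hne : ∀ e ∈ E, (pins e).Nonempty) (hω : ∀ e ∈ E, 0 < ω e) (hc : ∀ v, 0 < c v)
    (P0 : V → Fin k) (l : ℕ) (mv : ℕ → V × Fin k × Fin k)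
    (hsrc : ∀ j < l, (mv j).2.1 = applyMoves P0 mv j (mv j).1)
    (htgt : ∀ j < l, (mv j).2.2 ≠ (mv j).2.1)
    (hdist : ∀ j₁ < l, ∀ j₂ < l, j₁ ≠ j₂ → (mv j₁).1 ≠ (mv j₂).1) :
    ∀ e ∈ E,
      ((Finset.range l).filter (fun j => (mv j).1 ∈ pins e ∧
          pinCount pins (applyMoves P0 mv (j + 1)) e (mv j).2.2 = 1)).card ≤
        min k (pins e).card :=
  stmt3_general E pins P0 l mv hdist
end

section
/- (Correctness of the gain recalculation algorithm, decrease case.) Let M = ⟨m_1, …, m_l⟩ be a move sequence starting from a partition Π_0 of a weighted hypergraph H in which each node is moved at most once. Let e ∈ E be a net and let i be an index with u_i ∈ e. Then the move m_i reduces the pin count of e in its source block to zero, i.e., Φ_{Π_i}(e, s_i) = 0, if and only if non_moved(e, s_i) = 0, i = last_out(e, s_i), and i < first_in(e, s_i). -/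
open Finset

variable {V ι : Type*} [DecidableEq V] [DecidableEq ι]

/-- `first_in(e, B)`: the smallest index of a move whose moved node is a pin of `e` and whose
target block is `B` (`⊤` = `∞` if there is none). -/
def firstIn {k : ℕ} (l : ℕ) (mv : ℕ → V × Fin k × Fin k) (pins : ι → Finset V)
    (e : ι) (B : Fin k) : WithTop ℕ :=
  (((Finset.range l).filter (fun j => (mv j).1 ∈ pins e ∧ (mv j).2.2 = B)).min)

/-- `last_out(e, B)`: the largest index of a move whose moved node is a pin of `e` and whose
source block is `B` (`⊥` = `−∞` if there is none). -/
def lastOut {k : ℕ} (l : ℕ) (mv : ℕ → V × Fin k × Fin k) (pins : ι → Finset V)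
    (e : ι) (B : Fin k) : WithBot ℕ :=
  (((Finset.range l).filter (fun j => (mv j).1 ∈ pins e ∧ (mv j).2.1 = B)).max)

/-- `non_moved(e, B)`: the number of pins of `e` that are not moved by the sequence and are
assigned to block `B` by the initial partition. -/
def nonMoved {k : ℕ} (l : ℕ) (mv : ℕ → V × Fin k × Fin k) (pins : ι → Finset V)
    (P0 : V → Fin k) (e : ι) (B : Fin k) : ℕ :=
  ((pins e).filter (fun v => (∀ j < l, (mv j).1 ≠ v) ∧ P0 v = B)).card

/-- gain recalculation, decrease case. In a move sequence in which each node is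
moved at most once, a move `m_i` with `u_i ∈ e` reduces the pin count of `e` in its source block
to zero, i.e. `Φ_{Π_i}(e, s_i) = 0`, iff `non_moved(e, s_i) = 0`, `i = last_out(e, s_i)` and
`i < first_in(e, s_i)`. -/
theorem stmt4 {k : ℕ} (E : Finset ι) (pins : ι → Finset V) (c : V → ℝ) (ω : ι → ℝ)
    (hne : ∀ e ∈ E, (pins e).Nonempty) (hω : ∀ e ∈ E, 0 < ω e) (hc : ∀ v, 0 < c v)
    (P0 : V → Fin k) (l : ℕ) (mv : ℕ → V × Fin k × Fin k)
    (hsrc : ∀ j < l, (mv j).2.1 = applyMoves P0 mv j (mv j).1)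
    (htgt : ∀ j < l, (mv j).2.2 ≠ (mv j).2.1)
    (hdist : ∀ j₁ < l, ∀ j₂ < l, j₁ ≠ j₂ → (mv j₁).1 ≠ (mv j₂).1)
    (e : ι) (he : e ∈ E) (i : ℕ) (hi : i < l) (hpin : (mv i).1 ∈ pins e) :
    pinCount pins (applyMoves P0 mv (i + 1)) e (mv i).2.1 = 0 ↔
      nonMoved l mv pins P0 e (mv i).2.1 = 0 ∧
      lastOut l mv pins e (mv i).2.1 = (i : WithBot ℕ) ∧
      (i : WithTop ℕ) < firstIn l mv pins e (mv i).2.1 := by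
  set s := (mv i).2.1 with hs
  -- If a node is untouched by the first j moves, its block is the initial one.
  have hA : ∀ (v : V) (j : ℕ), (∀ j' < j, (mv j').1 ≠ v) → applyMoves P0 mv j v = P0 v := by
    intro v j
    induction j with
    | zero => intro _; rfl
    | succ j ih =>
      intro h
      have h1 : applyMoves P0 mv (j + 1) v
          = Function.update (applyMoves P0 mv j) (mv j).1 (mv j).2.2 v := rfl
      rw [h1, Function.update_of_ne (Ne.symm (h j (Nat.lt_succ_self j)))]
      exact ih fun j' hj' => h j' (hj'.trans (Nat.lt_succ_self j))
  -- After move j has happened (and up to index ≤ l), the moved node sits in its target.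
  have hB : ∀ j j' : ℕ, j < j' → j' ≤ l → applyMoves P0 mv j' (mv j).1 = (mv j).2.2 := by
    intro j j' hj hj'
    induction j' with
    | zero => omega
    | succ j' ih =>
      rcases Nat.lt_succ_iff_lt_or_eq.mp hj with h | h
      · have hne : (mv j).1 ≠ (mv j').1 := hdist j (by omega) j' (by omega) (by omega)
        have h1 : applyMoves P0 mv (j' + 1) (mv j).1
            = Function.update (applyMoves P0 mv j') (mv j').1 (mv j').2.2 (mv j).1 := rfl
        rw [h1, Function.update_of_ne hne]
        exact ih h (by omega)
      · subst h
        exact Function.update_self _ _ _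
  -- characterizations of the four statements
  have hL : pinCount pins (applyMoves P0 mv (i + 1)) e s = 0 ↔
      ∀ v ∈ pins e, applyMoves P0 mv (i + 1) v ≠ s := by
    simp [pinCount, Finset.card_eq_zero, Finset.filter_eq_empty_iff]
  have hNM : nonMoved l mv pins P0 e s = 0 ↔
      ∀ v ∈ pins e, (∀ j < l, (mv j).1 ≠ v) → P0 v ≠ s := by
    simp only [nonMoved, Finset.card_eq_zero, Finset.filter_eq_empty_iff]
    constructor
    · intro h v hv hm; exact fun hp => h hv ⟨hm, hp⟩
    · intro h v hv hc; exact h v hv hc.1 hc.2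
  have hiMem : i ∈ (Finset.range l).filter (fun j => (mv j).1 ∈ pins e ∧ (mv j).2.1 = s) :=
    Finset.mem_filter.mpr ⟨Finset.mem_range.mpr hi, hpin, rfl⟩
  have hLO : lastOut l mv pins e s = (i : WithBot ℕ) ↔
      ∀ j < l, (mv j).1 ∈ pins e → (mv j).2.1 = s → j ≤ i := by
    constructor
    · intro h j hj hpj hsj
      have := Finset.le_max (s := (Finset.range l).filter
        (fun j => (mv j).1 ∈ pins e ∧ (mv j).2.1 = s))
        (Finset.mem_filter.mpr ⟨Finset.mem_range.mpr hj, hpj, hsj⟩)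
      have h2 : (j : WithBot ℕ) ≤ (i : WithBot ℕ) := this.trans (le_of_eq h)
      exact WithBot.coe_le_coe.mp h2
    · intro h
      refine le_antisymm (Finset.max_le ?_) (Finset.le_max hiMem)
      intro j hj
      rw [Finset.mem_filter, Finset.mem_range] at hj
      exact WithBot.coe_le_coe.mpr (h j hj.1 hj.2.1 hj.2.2)
  have hFI : (i : WithTop ℕ) < firstIn l mv pins e s ↔
      ∀ j < l, (mv j).1 ∈ pins e → (mv j).2.2 = s → i < j := by
    constructor
    · intro h j hj hpj hsj
      have := Finset.min_le (s := (Finset.range l).filter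
        (fun j => (mv j).1 ∈ pins e ∧ (mv j).2.2 = s))
        (Finset.mem_filter.mpr ⟨Finset.mem_range.mpr hj, hpj, hsj⟩)
      exact WithTop.coe_lt_coe.mp (lt_of_lt_of_le h this)
    · intro h
      have h1 : ((i + 1 : ℕ) : WithTop ℕ) ≤ firstIn l mv pins e s := by
        apply Finset.le_min
        intro j hj
        rw [Finset.mem_filter, Finset.mem_range] at hj
        exact WithTop.coe_le_coe.mpr (h j hj.1 hj.2.1 hj.2.2)
      exact lt_of_lt_of_le (WithTop.coe_lt_coe.mpr (Nat.lt_succ_self i)) h1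
  rw [hL, hNM, hLO, hFI]
  constructor
  · intro h
    refine ⟨?_, ?_, ?_⟩
    · intro v hv hm hp
      exact h v hv (by rw [hA v (i + 1) fun j' hj' _h => (hm j' (by omega)) _h, hp])
    · intro j hj hpj hsj
      by_contra hji
      push_neg at hji
      have hun : ∀ j' < j, (mv j').1 ≠ (mv j).1 := fun j' hj' =>
        hdist j' (by omega) j hj (by omega)
      have h0 : applyMoves P0 mv j (mv j).1 = P0 (mv j).1 := hA _ _ hun
      have h1 : applyMoves P0 mv (i + 1) (mv j).1 = P0 (mv j).1 :=
        hA _ _ fun j' hj' => hun j' (by omega)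
      exact h (mv j).1 hpj (by rw [h1, ← h0, ← hsrc j hj, hsj])
    · intro j hj hpj hsj
      by_contra hji
      push_neg at hji
      exact h (mv j).1 hpj (by rw [hB j (i + 1) (by omega) (by omega), hsj])
  · rintro ⟨h1, h2, h3⟩ v hv hveq
    by_cases hmv : ∃ j, j ≤ i ∧ (mv j).1 = v
    · obtain ⟨j, hji, hjv⟩ := hmv
      have : applyMoves P0 mv (i + 1) v = (mv j).2.2 := by
        rw [← hjv]; exact hB j (i + 1) (by omega) (by omega)
      have := h3 j (by omega) (hjv ▸ hv) (this ▸ hveq)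
      omega
    · push_neg at hmv
      have hninit : applyMoves P0 mv (i + 1) v = P0 v :=
        hA v (i + 1) fun j' hj' => hmv j' (by omega)
      by_cases hmv2 : ∃ j, j < l ∧ (mv j).1 = v
      · obtain ⟨j, hjl, hjv⟩ := hmv2
        have hji : i < j := by
          by_contra hji; push_neg at hji; exact hmv j hji hjv
        have hun : ∀ j' < j, (mv j').1 ≠ v := fun j' hj' => by
          rw [← hjv]; exact hdist j' (by omega) j hjl (by omega)
        have hsj : (mv j).2.1 = s := by
          rw [hsrc j hjl, hjv, hA v j hun, ← hninit, hveq]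
        have := h2 j hjl (hjv ▸ hv) hsj
        omega
      · push_neg at hmv2
        exact h1 v hv (fun j hj => hmv2 j hj) (hninit ▸ hveq)
end

section
/- (Correctness of the gain recalculation algorithm, increase case.) Let M = ⟨m_1, …, m_l⟩ be a move sequence starting from a partition Π_0 of a weighted hypergraph H in which each node is moved at most once. Let e ∈ E be a net and let i be an index with u_i ∈ e. Then the move m_i increases the pin count of e in its target block from zero to one, i.e., Φ_{Π_i}(e, t_i) = 1, if and only if non_moved(e, t_i) = 0, i = first_in(e, t_i), and i > last_out(e, t_i). -/
open Finset

variable {V ι : Type*} [DecidableEq V] [DecidableEq ι]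

lemma applyMoves_not_moved {k : ℕ} (P0 : V → Fin k) (mv : ℕ → V × Fin k × Fin k)
    (v : V) : ∀ j, (∀ j' < j, (mv j').1 ≠ v) → applyMoves P0 mv j v = P0 v := by
  intro j
  induction j with
  | zero => intro _; rfl
  | succ n ih =>
    intro h
    show Function.update (applyMoves P0 mv n) (mv n).1 (mv n).2.2 v = P0 v
    rw [Function.update_of_ne (Ne.symm (h n (Nat.lt_succ_self n)))]
    exact ih fun j' hj' => h j' (Nat.lt_succ_of_lt hj')

lemma applyMoves_moved {k l : ℕ} (P0 : V → Fin k) (mv : ℕ → V × Fin k × Fin k)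
    (hdist : ∀ j₁ < l, ∀ j₂ < l, j₁ ≠ j₂ → (mv j₁).1 ≠ (mv j₂).1)
    (j' : ℕ) (hj' : j' < l) : ∀ j, j' < j → j ≤ l →
    applyMoves P0 mv j (mv j').1 = (mv j').2.2 := by
  intro j
  induction j with
  | zero => intro h; omega
  | succ n ih =>
    intro h1 h2
    show Function.update (applyMoves P0 mv n) (mv n).1 (mv n).2.2 (mv j').1 = _
    by_cases hc : j' = n
    · subst hc; rw [Function.update_self]
    · rw [Function.update_of_ne (hdist j' hj' n (by omega) hc)]
      exact ih (by omega) (by omega)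

/-- gain recalculation, increase case. In a move sequence in which each node is
moved at most once, a move `m_i` with `u_i ∈ e` increases the pin count of `e` in its target block
from zero to one, i.e. `Φ_{Π_i}(e, t_i) = 1`, iff `non_moved(e, t_i) = 0`, `i = first_in(e, t_i)`
and `i > last_out(e, t_i)`. -/
theorem stmt5 {k : ℕ} (E : Finset ι) (pins : ι → Finset V) (c : V → ℝ) (ω : ι → ℝ)
    (hne : ∀ e ∈ E, (pins e).Nonempty) (hω : ∀ e ∈ E, 0 < ω e) (hc : ∀ v, 0 < c v)
    (P0 : V → Fin k) (l : ℕ) (mv : ℕ → V × Fin k × Fin k)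
    (hsrc : ∀ j < l, (mv j).2.1 = applyMoves P0 mv j (mv j).1)
    (htgt : ∀ j < l, (mv j).2.2 ≠ (mv j).2.1)
    (hdist : ∀ j₁ < l, ∀ j₂ < l, j₁ ≠ j₂ → (mv j₁).1 ≠ (mv j₂).1)
    (e : ι) (he : e ∈ E) (i : ℕ) (hi : i < l) (hpin : (mv i).1 ∈ pins e) :
    pinCount pins (applyMoves P0 mv (i + 1)) e (mv i).2.2 = 1 ↔
      nonMoved l mv pins P0 e (mv i).2.2 = 0 ∧
      firstIn l mv pins e (mv i).2.2 = (i : WithTop ℕ) ∧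
      lastOut l mv pins e (mv i).2.2 < (i : WithBot ℕ) := by
  classical
  set u := (mv i).1 with hu
  set B := (mv i).2.2 with hB
  -- source of each move is initial block
  have hsrc' : ∀ j < l, (mv j).2.1 = P0 (mv j).1 := by
    intro j hj
    rw [hsrc j hj]
    exact (applyMoves_not_moved P0 mv _ j
      (fun j' hj' => hdist j' (by omega) j hj (by omega)))
  have huB : applyMoves P0 mv (i + 1) u = B :=
    applyMoves_moved P0 mv hdist i hi (i + 1) (Nat.lt_succ_self i) hi
  have humem : u ∈ (pins e).filter (fun v => applyMoves P0 mv (i + 1) v = B) :=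
    mem_filter.mpr ⟨hpin, huB⟩
  -- characterize LHS
  have hcard : pinCount pins (applyMoves P0 mv (i + 1)) e B = 1 ↔
      ∀ v ∈ pins e, applyMoves P0 mv (i + 1) v = B → v = u := by
    constructor
    · intro h v hv hvB
      obtain ⟨a, ha⟩ := Finset.card_eq_one.mp h
      have h1 : u = a := by rw [ha] at humem; simpa using humem
      have h2 : v = a := by
        have : v ∈ (pins e).filter (fun v => applyMoves P0 mv (i + 1) v = B) :=
          mem_filter.mpr ⟨hv, hvB⟩
        rw [ha] at this; simpa using this
      rw [h1.symm] at h2; exact h2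
    · intro h
      apply Finset.card_eq_one.mpr
      refine ⟨u, ?_⟩
      ext x
      simp only [mem_filter, mem_singleton]
      constructor
      · rintro ⟨hx, hxB⟩; exact h x hx hxB
      · rintro rfl; exact ⟨hpin, huB⟩
  -- characterize nonMoved = 0
  have hnm : nonMoved l mv pins P0 e B = 0 ↔
      ∀ v ∈ pins e, (∀ j < l, (mv j).1 ≠ v) → P0 v ≠ B := by
    unfold nonMoved
    rw [Finset.card_eq_zero, Finset.filter_eq_empty_iff]
    constructor
    · intro h v hv h1 h2; exact h hv ⟨h1, h2⟩
    · intro h v hv hc; exact h v hv hc.1 hc.2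
  -- characterize firstIn = i
  have hiS : i ∈ (Finset.range l).filter (fun j => (mv j).1 ∈ pins e ∧ (mv j).2.2 = B) :=
    mem_filter.mpr ⟨mem_range.mpr hi, hpin, rfl⟩
  have hfirst : firstIn l mv pins e B = (i : WithTop ℕ) ↔
      ∀ j < i, ¬ ((mv j).1 ∈ pins e ∧ (mv j).2.2 = B) := by
    unfold firstIn
    rw [Nat.cast_withTop]
    constructor
    · intro h j hj hc
      have hmem : j ∈ (Finset.range l).filter
          (fun j => (mv j).1 ∈ pins e ∧ (mv j).2.2 = B) :=
        mem_filter.mpr ⟨mem_range.mpr (by omega), hc⟩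
      have := Finset.min_le hmem
      rw [h] at this
      exact absurd (WithTop.coe_le_coe.mp this) (by omega)
    · intro h
      refine le_antisymm (Finset.min_le hiS) ?_
      apply Finset.le_min
      intro b hb
      obtain ⟨hbr, hbc⟩ := mem_filter.mp hb
      refine WithTop.coe_le_coe.mpr ?_
      by_contra hlt
      exact h b (by omega) hbc
  -- characterize lastOut < i
  have hlast : lastOut l mv pins e B < (i : WithBot ℕ) ↔
      ∀ j, i ≤ j → j < l → ¬ ((mv j).1 ∈ pins e ∧ (mv j).2.1 = B) := by
    unfold lastOut
    rw [Nat.cast_withBot]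
    constructor
    · intro h j hij hjl hc
      have hmem : j ∈ (Finset.range l).filter
          (fun j => (mv j).1 ∈ pins e ∧ (mv j).2.1 = B) :=
        mem_filter.mpr ⟨mem_range.mpr hjl, hc⟩
      have h2 := lt_of_le_of_lt (Finset.le_max hmem) h
      exact absurd (WithBot.coe_lt_coe.mp h2) (by omega)
    · intro h
      rcases hm : ((Finset.range l).filter
          (fun j => (mv j).1 ∈ pins e ∧ (mv j).2.1 = B)).max with _ | b
      · exact WithBot.bot_lt_coe i
      · have hbmem := Finset.mem_of_max hm
        obtain ⟨hbr, hbc⟩ := mem_filter.mp hbmem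
        have : b < i := by
          by_contra hge
          exact h b (by omega) (mem_range.mp hbr) hbc
        exact WithBot.coe_lt_coe.mpr this
  rw [hcard, hnm, hfirst, hlast]
  constructor
  · intro H
    refine ⟨?_, ?_, ?_⟩
    · intro v hv h1 h2
      have hvB : applyMoves P0 mv (i + 1) v = B := by
        rw [applyMoves_not_moved P0 mv v (i + 1) (fun j' hj' => h1 j' (by omega))]
        exact h2
      exact h1 i hi (H v hv hvB).symm
    · intro j hj hc
      have hvB : applyMoves P0 mv (i + 1) (mv j).1 = B := by
        rw [applyMoves_moved P0 mv hdist j (by omega) (i + 1) (by omega) hi]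
        exact hc.2
      exact hdist j (by omega) i hi (by omega) (H _ hc.1 hvB)
    · intro j hij hjl hc
      rcases eq_or_lt_of_le hij with rfl | hlt
      · exact htgt i hi (hc.2 ▸ rfl)
      · have h1 : ∀ j' < i + 1, (mv j').1 ≠ (mv j).1 :=
          fun j' hj' => hdist j' (by omega) j hjl (by omega)
        have hvB : applyMoves P0 mv (i + 1) (mv j).1 = B := by
          rw [applyMoves_not_moved P0 mv _ (i + 1) h1, ← hsrc' j hjl]
          exact hc.2
        exact hdist j hjl i hi (by omega) (H _ hc.1 hvB)
  · rintro ⟨h0, h1, h2⟩ v hv hvB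
    by_contra hne'
    by_cases hvm : ∃ j < l, (mv j).1 = v
    · obtain ⟨j, hjl, hjv⟩ := hvm
      have hji : j ≠ i := by rintro rfl; exact hne' hjv.symm
      rcases lt_or_gt_of_ne hji with hlt | hgt
      · have : applyMoves P0 mv (i + 1) (mv j).1 = (mv j).2.2 :=
          applyMoves_moved P0 mv hdist j hjl (i + 1) (by omega) hi
        rw [hjv] at this
        exact h1 j hlt ⟨hjv ▸ hv, this ▸ hvB⟩
      · have hnm' : ∀ j' < i + 1, (mv j').1 ≠ v := by
          intro j' hj' heq
          exact hdist j' (by omega) j hjl (by omega) (heq.trans hjv.symm)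
        have hP0 : P0 v = B := by
          rw [← applyMoves_not_moved P0 mv v (i + 1) hnm']
          exact hvB
        exact h2 j (by omega) hjl ⟨hjv ▸ hv, by rw [hsrc' j hjl, hjv, hP0]⟩
    · push_neg at hvm
      have hP0 : P0 v = B := by
        rw [← applyMoves_not_moved P0 mv v (i + 1) (fun j' hj' => hvm j' (by omega))]
        exact hvB
      exact h0 v hv hvm hP0
end

section
/- (Gain table correctness, penalty part.) Let M = ⟨m_1, …, m_l⟩ be a move sequence starting from a partition Π_0 of a weighted hypergraph H in which each node is moved at most once. Initialize a table p with p(v, i) = p_{Π_0}(v, i) for all nodes v and blocks i, and process the moves m_j = (u, s, t) in order, applying after each move the following updates for every net e ∈ I(u): if Φ_{Π_j}(e, s) = 0 then add ω(e) to p(v, s) for every v ∈ e; if Φ_{Π_j}(e, t) = 1 then subtract ω(e) from p(v, t) for every v ∈ e. Then after processing all moves, p(v, i) = p_{Π_l}(v, i) for every node v ∈ V and every block i ∈ {1, …, k}. -/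
open Finset

variable {V ι : Type*} [DecidableEq V] [DecidableEq ι]

/-- The penalty `p_Π(v, i) = Σ_{e ∈ I(v), Φ_Π(e,i)=0} ω(e)` for moving `v` into block `i`. -/
noncomputable def penalty {k : ℕ} (E : Finset ι) (pins : ι → Finset V) (ω : ι → ℝ)
    (P : V → Fin k) (v : V) (i : Fin k) : ℝ :=
  ∑ e ∈ E.filter (fun e => v ∈ pins e ∧ pinCount pins P e i = 0), ω e

set_option linter.unusedSectionVars false

lemma pinCount_split {k : ℕ} (pins : ι → Finset V) (Q : V → Fin k) (e : ι) (u : V)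
    (hu : u ∈ pins e) (i : Fin k) :
    pinCount pins Q e i = (((pins e).erase u).filter (fun v => Q v = i)).card
      + (if Q u = i then 1 else 0) := by
  rw [pinCount, ← Finset.insert_erase hu, Finset.filter_insert,
    Finset.erase_insert (Finset.notMem_erase u _)]
  split
  · rw [Finset.card_insert_of_notMem (by simp)]
  · simp

lemma step_lemma {k : ℕ} (E : Finset ι) (pins : ι → Finset V) (ω : ι → ℝ)
    (P : V → Fin k) (u : V) (s t : Fin k) (hs : s = P u) (hts : t ≠ s) (v : V) (i : Fin k) :
    penalty E pins ω P v i +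
      ((∑ e ∈ E.filter (fun e => u ∈ pins e ∧ v ∈ pins e ∧ i = s ∧
          pinCount pins (Function.update P u t) e s = 0), ω e) -
       (∑ e ∈ E.filter (fun e => u ∈ pins e ∧ v ∈ pins e ∧ i = t ∧
          pinCount pins (Function.update P u t) e t = 1), ω e)) =
    penalty E pins ω (Function.update P u t) v i := by
  unfold penalty
  rw [Finset.sum_filter, Finset.sum_filter, Finset.sum_filter, Finset.sum_filter,
    ← Finset.sum_sub_distrib, ← Finset.sum_add_distrib]
  refine Finset.sum_congr rfl fun e _ => ?_
  by_cases hu : u ∈ pins e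
  · have hbase : ∀ i', (((pins e).erase u).filter (fun w => Function.update P u t w = i')).card
        = (((pins e).erase u).filter (fun w => P w = i')).card := by
      intro i'
      refine congrArg _ (Finset.filter_congr fun w hw => ?_)
      rw [Function.update_of_ne (Finset.ne_of_mem_erase hw)]
    set b : Fin k → ℕ := fun i' => (((pins e).erase u).filter (fun w => P w = i')).card with hb
    have hc1 : ∀ i', pinCount pins (Function.update P u t) e i'
        = b i' + (if t = i' then 1 else 0) := by
      intro i'
      rw [pinCount_split pins _ e u hu, hbase, Function.update_self]
    have hc2 : ∀ i', pinCount pins P e i' = b i' + (if P u = i' then 1 else 0) := fun i' =>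
      pinCount_split pins P e u hu i'
    clear hbase hb
    clear_value b
    simp only [hc1, hc2, ← hs, hu, true_and]
    by_cases hv : v ∈ pins e
    · simp only [hv, true_and, if_neg hts, eq_self_iff_true, if_true, add_zero]
      by_cases his : i = s <;> by_cases hit : i = t
      · exact absurd (hit.symm.trans his) hts
      · simp only [his, eq_self_iff_true, if_true, true_and,
          if_neg (fun h : s = t ∧ b t + 1 = 1 => hts h.1.symm),
          if_neg (show ¬ b s + 1 = 0 by omega), if_neg hts]
        ring
      · simp only [hit, eq_self_iff_true, if_true, true_and,
          if_neg (fun h : s = t => hts h.symm), add_zero,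
          if_neg (fun h : t = s ∧ b s = 0 => hts h.1),
          if_neg (show ¬ b t + 1 = 0 by omega),
          show (b t + 1 = 1) = (b t = 0) by simp]
        ring
      · simp only [if_neg (fun h : s = i => his h.symm),
          if_neg (fun h : t = i => hit h.symm), add_zero,
          if_neg (not_and_of_not_left _ his), if_neg (not_and_of_not_left _ hit)]
        ring
    · simp [hv]
  · have hpc : pinCount pins (Function.update P u t) e i = pinCount pins P e i := by
      unfold pinCount
      refine congrArg _ (Finset.filter_congr fun w hw => ?_)
      rw [Function.update_of_ne (ne_of_mem_of_not_mem hw hu)]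
    simp [hu, hpc]

/-- gain table correctness, penalty part. Starting from the table
`p(v, i) = p_{Π_0}(v, i)` and processing the moves `m_j = (u, s, t)` in order, where after each
move and for every net `e ∈ I(u)` we add `ω(e)` to `p(v, s)` for every `v ∈ e` if
`Φ_{Π_j}(e, s) = 0`, and subtract `ω(e)` from `p(v, t)` for every `v ∈ e` if `Φ_{Π_j}(e, t) = 1`,
the resulting table satisfies `p(v, i) = p_{Π_l}(v, i)` for every node `v` and block `i`. -/
theorem stmt6 {k : ℕ} (E : Finset ι) (pins : ι → Finset V) (c : V → ℝ) (ω : ι → ℝ)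
    (hne : ∀ e ∈ E, (pins e).Nonempty) (hω : ∀ e ∈ E, 0 < ω e) (hc : ∀ v, 0 < c v)
    (P0 : V → Fin k) (l : ℕ) (mv : ℕ → V × Fin k × Fin k)
    (hsrc : ∀ j < l, (mv j).2.1 = applyMoves P0 mv j (mv j).1)
    (htgt : ∀ j < l, (mv j).2.2 ≠ (mv j).2.1)
    (hdist : ∀ j₁ < l, ∀ j₂ < l, j₁ ≠ j₂ → (mv j₁).1 ≠ (mv j₂).1) :
    ∀ (v : V) (i : Fin k),
      penalty E pins ω P0 v i +
        (∑ j ∈ Finset.range l,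
          ((∑ e ∈ E.filter (fun e => (mv j).1 ∈ pins e ∧ v ∈ pins e ∧ i = (mv j).2.1 ∧
                pinCount pins (applyMoves P0 mv (j + 1)) e (mv j).2.1 = 0), ω e) -
           (∑ e ∈ E.filter (fun e => (mv j).1 ∈ pins e ∧ v ∈ pins e ∧ i = (mv j).2.2 ∧
                pinCount pins (applyMoves P0 mv (j + 1)) e (mv j).2.2 = 1), ω e))) =
      penalty E pins ω (applyMoves P0 mv l) v i := by
  induction l with
  | zero => intro v i; simp [applyMoves]
  | succ l ih =>
    intro v i
    rw [Finset.sum_range_succ, ← add_assoc,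
      ih (fun j hj => hsrc j (Nat.lt_succ_of_lt hj)) (fun j hj => htgt j (Nat.lt_succ_of_lt hj))
        (fun j₁ h₁ j₂ h₂ => hdist j₁ (Nat.lt_succ_of_lt h₁) j₂ (Nat.lt_succ_of_lt h₂)) v i]
    have hl := hsrc l (Nat.lt_succ_self l)
    have htl := htgt l (Nat.lt_succ_self l)
    exact step_lemma E pins ω (applyMoves P0 mv l) (mv l).1 (mv l).2.1 (mv l).2.2 hl htl v i
end

section
/- (Gain table correctness, benefit part.) Let M = ⟨m_1, …, m_l⟩ be a move sequence starting from a partition Π_0 of a weighted hypergraph H in which each node is moved at most once. Initialize a table b with b(v) = b_{Π_0}(v) for all nodes v, and process the moves m_j = (u, s, t) in order, applying after each move the following updates for every net e ∈ I(u): if Φ_{Π_j}(e, s) = 1 then add ω(e) to b(v) for every v ∈ e with Π_j(v) = s; if Φ_{Π_j}(e, t) = 2 then subtract ω(e) from b(v) for every v ∈ e with Π_j(v) = t. Then after processing all moves, b(v) = b_{Π_l}(v) for every node v ∈ V that is not moved by M (i.e., v ∉ {u_1, …, u_l}). -/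
open Finset

variable {V ι : Type*} [DecidableEq V] [DecidableEq ι]

/-- The benefit `b_Π(v) = Σ_{e ∈ I(v), Φ_Π(e, Π(v))=1} ω(e)` of moving `v` out of its block. -/
noncomputable def benefit {k : ℕ} (E : Finset ι) (pins : ι → Finset V) (ω : ι → ℝ)
    (P : V → Fin k) (v : V) : ℝ :=
  ∑ e ∈ E.filter (fun e => v ∈ pins e ∧ pinCount pins P e (P v) = 1), ω e

lemma pinCount_update_of_not_mem {k : ℕ} (pins : ι → Finset V) (P : V → Fin k)
    {u : V} {e : ι} (t : Fin k) (hu : u ∉ pins e) (i : Fin k) :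
    pinCount pins (Function.update P u t) e i = pinCount pins P e i := by
  unfold pinCount
  congr 1
  apply Finset.filter_congr
  intro w hw
  have : w ≠ u := fun h => hu (h ▸ hw)
  simp [Function.update_of_ne this]

lemma pinCount_erase {k : ℕ} (pins : ι → Finset V) (P : V → Fin k)
    {u : V} {e : ι} (hu : u ∈ pins e) (i : Fin k) :
    pinCount pins P e i =
      (((pins e).erase u).filter (fun w => P w = i)).card + (if P u = i then 1 else 0) := by
  unfold pinCount
  conv_lhs => rw [← Finset.insert_erase hu]
  rw [Finset.filter_insert]
  split_ifs with h
  · rw [Finset.card_insert_of_notMem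
      (fun hmem => (Finset.mem_erase.1 (Finset.mem_filter.1 hmem).1).1 rfl)]
  · simp

lemma pinCount_update_erase {k : ℕ} (pins : ι → Finset V) (P : V → Fin k)
    {u : V} {e : ι} (t : Fin k) (hu : u ∈ pins e) (i : Fin k) :
    pinCount pins (Function.update P u t) e i =
      (((pins e).erase u).filter (fun w => P w = i)).card + (if t = i then 1 else 0) := by
  rw [pinCount_erase pins (Function.update P u t) hu, Function.update_self]
  congr 2
  apply Finset.filter_congr
  intro w hw
  simp [Function.update_of_ne (Finset.mem_erase.1 hw).1]

lemma benefit_update {k : ℕ} (E : Finset ι) (pins : ι → Finset V) (ω : ι → ℝ)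
    (P : V → Fin k) (u : V) (t : Fin k) (ht : t ≠ P u) (v : V) (hv : u ≠ v) :
    benefit E pins ω (Function.update P u t) v =
      benefit E pins ω P v +
      ((∑ e ∈ E.filter (fun e => u ∈ pins e ∧ v ∈ pins e ∧
            Function.update P u t v = P u ∧
            pinCount pins (Function.update P u t) e (P u) = 1), ω e) -
       (∑ e ∈ E.filter (fun e => u ∈ pins e ∧ v ∈ pins e ∧
            Function.update P u t v = t ∧
            pinCount pins (Function.update P u t) e t = 2), ω e)) := by
  unfold benefit
  rw [Finset.sum_filter, Finset.sum_filter, Finset.sum_filter, Finset.sum_filter,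
    ← Finset.sum_sub_distrib, ← Finset.sum_add_distrib]
  apply Finset.sum_congr rfl
  intro e _
  have hv' : Function.update P u t v = P v := Function.update_of_ne (Ne.symm hv) t P
  rw [hv']
  by_cases hve : v ∈ pins e
  · by_cases hue : u ∈ pins e
    · set g : Fin k → ℕ := fun i => (((pins e).erase u).filter (fun w => P w = i)).card with hg
      have hΦ : ∀ i, pinCount pins P e i = g i + (if P u = i then 1 else 0) :=
        fun i => pinCount_erase pins P hue i
      have hΦ' : ∀ i, pinCount pins (Function.update P u t) e i
          = g i + (if t = i then 1 else 0) :=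
        fun i => pinCount_update_erase pins P t hue i
      have hgv : 1 ≤ g (P v) := by
        apply Finset.card_pos.2
        exact ⟨v, Finset.mem_filter.2 ⟨Finset.mem_erase.2 ⟨Ne.symm hv, hve⟩, rfl⟩⟩
      have hput : ¬ (P u = t) := fun h => ht h.symm
      by_cases h1 : P v = P u
      · by_cases h2 : P v = t
        · exact absurd (h2.symm.trans h1) ht
        · have ht1 : ¬ (t = P v) := fun h => h2 h.symm
          have hgu : 1 ≤ g (P u) := h1 ▸ hgv
          simp only [hΦ, hΦ', hve, hue, h1, h2, ht1, ht, hput, if_neg, if_pos, true_and,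
            and_true, false_and, and_false, if_false, ite_false, ite_true, Nat.add_zero, if_true]
          rw [if_neg (show ¬ (g (P u) + 1 = 1) by omega)]
          ring
      · by_cases h2 : P v = t
        · have hne1 : ¬ (P u = P v) := fun h => h1 h.symm
          have hgt : 1 ≤ g t := h2 ▸ hgv
          simp only [hΦ, hΦ', hve, hue, h1, h2, hne1, hput, ht, true_and, and_true,
            false_and, and_false, if_false, ite_false, ite_true, Nat.add_zero]
          rw [if_neg (show ¬ (g t + 1 = 1) by omega)]
          by_cases hh : g t = 1
          · rw [if_pos hh, if_pos (by omega : g t + 1 = 2)]; ring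
          · rw [if_neg hh, if_neg (by omega : ¬ (g t + 1 = 2))]; ring
        · have hne1 : ¬ (P u = P v) := fun h => h1 h.symm
          have hne2 : ¬ (t = P v) := fun h => h2 h.symm
          simp only [hΦ, hΦ', hve, hue, h1, h2, hne1, hne2, hput, ht, true_and, and_true,
            false_and, and_false, if_false, ite_false, Nat.add_zero]
          ring
    · simp only [pinCount_update_of_not_mem pins P t hue, hue, false_and, if_false, ite_false]
      ring
  · simp [hve]

lemma stmt7_aux {k : ℕ} (E : Finset ι) (pins : ι → Finset V) (ω : ι → ℝ)
    (P0 : V → Fin k) (mv : ℕ → V × Fin k × Fin k) (v : V) :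
    ∀ l : ℕ, (∀ j < l, (mv j).2.1 = applyMoves P0 mv j (mv j).1) →
      (∀ j < l, (mv j).2.2 ≠ (mv j).2.1) → (∀ j < l, (mv j).1 ≠ v) →
      benefit E pins ω P0 v +
        (∑ j ∈ Finset.range l,
          ((∑ e ∈ E.filter (fun e => (mv j).1 ∈ pins e ∧ v ∈ pins e ∧
                applyMoves P0 mv (j + 1) v = (mv j).2.1 ∧
                pinCount pins (applyMoves P0 mv (j + 1)) e (mv j).2.1 = 1), ω e) -
           (∑ e ∈ E.filter (fun e => (mv j).1 ∈ pins e ∧ v ∈ pins e ∧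
                applyMoves P0 mv (j + 1) v = (mv j).2.2 ∧
                pinCount pins (applyMoves P0 mv (j + 1)) e (mv j).2.2 = 2), ω e))) =
      benefit E pins ω (applyMoves P0 mv l) v := by
  intro l
  induction l with
  | zero => intro _ _ _; simp [applyMoves]
  | succ l ih =>
    intro hsrc htgt hv
    rw [Finset.sum_range_succ, ← add_assoc,
      ih (fun j hj => hsrc j (by omega)) (fun j hj => htgt j (by omega))
        (fun j hj => hv j (by omega))]
    have hs := hsrc l (by omega)
    have ht := htgt l (by omega)
    have hv' := hv l (by omega)
    have hstep := benefit_update E pins ω (applyMoves P0 mv l) (mv l).1 (mv l).2.2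
      (hs ▸ ht) v hv'
    have hP : applyMoves P0 mv (l + 1)
        = Function.update (applyMoves P0 mv l) (mv l).1 (mv l).2.2 := rfl
    rw [hP, hs, hstep]

/-- gain table correctness, benefit part. Starting from the table
`b(v) = b_{Π_0}(v)` and processing the moves `m_j = (u, s, t)` in order, where after each move
and for every net `e ∈ I(u)` we add `ω(e)` to `b(v)` for every `v ∈ e` with `Π_j(v) = s` if
`Φ_{Π_j}(e, s) = 1`, and subtract `ω(e)` from `b(v)` for every `v ∈ e` with `Π_j(v) = t` if
`Φ_{Π_j}(e, t) = 2`, the resulting table satisfies `b(v) = b_{Π_l}(v)` for every node `v`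
that is not moved by the sequence. -/
theorem stmt7 {k : ℕ} (E : Finset ι) (pins : ι → Finset V) (c : V → ℝ) (ω : ι → ℝ)
    (hne : ∀ e ∈ E, (pins e).Nonempty) (hω : ∀ e ∈ E, 0 < ω e) (hc : ∀ v, 0 < c v)
    (P0 : V → Fin k) (l : ℕ) (mv : ℕ → V × Fin k × Fin k)
    (hsrc : ∀ j < l, (mv j).2.1 = applyMoves P0 mv j (mv j).1)
    (htgt : ∀ j < l, (mv j).2.2 ≠ (mv j).2.1)
    (hdist : ∀ j₁ < l, ∀ j₂ < l, j₁ ≠ j₂ → (mv j₁).1 ≠ (mv j₂).1) :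
    ∀ v : V, (∀ j < l, (mv j).1 ≠ v) →
      benefit E pins ω P0 v +
        (∑ j ∈ Finset.range l,
          ((∑ e ∈ E.filter (fun e => (mv j).1 ∈ pins e ∧ v ∈ pins e ∧
                applyMoves P0 mv (j + 1) v = (mv j).2.1 ∧
                pinCount pins (applyMoves P0 mv (j + 1)) e (mv j).2.1 = 1), ω e) -
           (∑ e ∈ E.filter (fun e => (mv j).1 ∈ pins e ∧ v ∈ pins e ∧
                applyMoves P0 mv (j + 1) v = (mv j).2.2 ∧
                pinCount pins (applyMoves P0 mv (j + 1)) e (mv j).2.2 = 2), ω e))) =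
      benefit E pins ω (applyMoves P0 mv l) v := by
  intro v hv
  exact stmt7_aux E pins ω P0 mv v l hsrc htgt hv
end

section
/- (Order-independence of forest contractions.) Let H = (V, E, c, ω) be a weighted hypergraph and let F be a rooted forest on V, given by a parent function par : D → V on a subset D ⊆ V such that the directed graph with edges {(v, par(v)) | v ∈ D} is acyclic; the nodes of V \ D are the roots, and root(w) denotes the root of the tree of F containing w. Call an enumeration v_1, …, v_r of D children-first if every node of D appears after all of its children in F. Then for every children-first enumeration, performing the pairwise contractions of v_1 onto par(v_1), then v_2 onto par(v_2), …, then v_r onto par(v_r) (where contracting v onto w replaces v by w in every net of the current hypergraph and adds c(v) to the weight of w) yields the same weighted hypergraph, namely the contraction of H by the clustering whose clusters are the trees of F: its node set is V \ D, each net e ∈ E becomes the image root(e) := {root(w) | w ∈ e} with weight ω(e), and each node r has weight Σ_{w ∈ V with root(w) = r} c(w). -/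
/-! Since the enumeration is children-first, its first node `x` is a leaf. Contracting `x` onto its
parent does not change the image of any net under the root map, because `rt x = rt (par x)`, and
it moves `c x` to a node of the same tree. Afterwards `x` occurs in no net, so it may be treated
as a root of its own (`rt` becomes `Function.update rt x x`), and the rest of the enumeration is
children-first for the smaller forest: induction on the enumeration. -/

open Finset

variable {V ι : Type*} [DecidableEq V] [Fintype V] [DecidableEq ι]

/-- Contracting node `x` onto node `w` in the pin lists: `x` is replaced by `w` in every net
containing `x` (which removes `x` from nets already containing `w`). -/
def contractPins (p : ι → Finset V) (x w : V) : ι → Finset V :=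
  fun e => if x ∈ p e then insert w ((p e).erase x) else p e

/-- Contracting node `x` onto node `w` in the node weights: `w` receives weight `c(w) + c(x)`. -/
def contractWeight (cw : V → ℝ) (x w : V) : V → ℝ :=
  Function.update cw w (cw w + cw x)

/-- Perform a sequence of pairwise contractions `(x, w)` (contract `x` onto `w`), in order, on a
hypergraph state given by pin lists and node weights. -/
def runContractions (p0 : ι → Finset V) (c0 : V → ℝ) (seq : List (V × V)) :
    (ι → Finset V) × (V → ℝ) :=
  seq.foldl (fun st m => (contractPins st.1 m.1 m.2, contractWeight st.2 m.1 m.2)) (p0, c0)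

section contraction

omit [Fintype V] [DecidableEq ι]

theorem runContractions_cons (p : ι → Finset V) (c : V → ℝ) (m : V × V) (seq : List (V × V)) :
    runContractions p c (m :: seq) =
      runContractions (contractPins p m.1 m.2) (contractWeight c m.1 m.2) seq :=
  rfl

theorem notMem_contractPins (p : ι → Finset V) {x w : V} (hxw : x ≠ w) (e : ι) :
    x ∉ contractPins p x w e := by
  unfold contractPins
  split_ifs
  · simp [hxw]
  · assumption

theorem image_contractPins {β : Type*} [DecidableEq β] (p : ι → Finset V) {f : V → β} {x w : V}
    (h : f x = f w) (e : ι) : (contractPins p x w e).image f = (p e).image f := by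
  unfold contractPins
  split_ifs with hx
  · rw [image_insert, ← h, ← image_insert, insert_erase hx]
  · rfl

theorem sum_contractWeight_of_mem (c : V → ℝ) {x w : V} {s : Finset V} (hw : w ∈ s) (hx : x ∉ s) :
    ∑ v ∈ s, contractWeight c x w v = ∑ v ∈ insert x s, c v := by
  rw [contractWeight, sum_update_of_mem hw, sum_insert hx, sdiff_singleton_eq_erase,
    ← add_sum_erase s c hw]
  ring

theorem sum_contractWeight_of_notMem (c : V → ℝ) {x w : V} {s : Finset V} (hw : w ∉ s) :
    ∑ v ∈ s, contractWeight c x w v = ∑ v ∈ s, c v :=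
  sum_update_of_notMem hw _ _

end contraction

section forest

omit [DecidableEq ι]

theorem sum_fiber_update_contractWeight (c : V → ℝ) (f : V → V) {x w r : V} (hxw : x ≠ w)
    (hf : f x = f w) (hr : r ≠ x) :
    ∑ v ∈ univ.filter (fun v => Function.update f x x v = r), contractWeight c x w v =
      ∑ v ∈ univ.filter (fun v => f v = r), c v := by
  set S := univ.filter (fun v => f v = r)
  have hfiber : univ.filter (fun v => Function.update f x x v = r) = S.erase x := by
    ext v
    by_cases hv : v = x
    · subst hv; simp [Ne.symm hr]
    · simp [S, hv]
  rw [hfiber]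
  by_cases hxr : f x = r
  · have hxS : x ∈ S := by simp [S, hxr]
    have hwS : w ∈ S.erase x := mem_erase.2 ⟨hxw.symm, by simp [S, ← hf, hxr]⟩
    rw [sum_contractWeight_of_mem c hwS (notMem_erase x S), insert_erase hxS]
  · have hxS : x ∉ S := by simp [S, hxr]
    have hwS : w ∉ S := by simp [S, ← hf, hxr]
    rw [erase_eq_of_notMem hxS, sum_contractWeight_of_notMem c hwS]

theorem runContractions_forest (par : V → V) (l : List V) (hl : l.Nodup)
    (hpar : ∀ x ∈ l, par x ≠ x) (hcf : l.Pairwise fun x y => par y ≠ x)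
    (pins : ι → Finset V) (c : V → ℝ) (rt : V → V)
    (hrt₁ : ∀ w, w ∉ l → rt w = w) (hrt₂ : ∀ w ∈ l, rt w = rt (par w)) :
    (∀ e, (runContractions pins c (l.map fun x => (x, par x))).1 e = (pins e).image rt) ∧
      ∀ r, r ∉ l → (runContractions pins c (l.map fun x => (x, par x))).2 r =
        ∑ w ∈ univ.filter (fun w => rt w = r), c w := by
  induction l generalizing pins c rt with
  | nil =>
    have hrt : rt = id := funext fun w => hrt₁ w List.not_mem_nil
    subst hrt
    refine ⟨fun e => (image_id).symm, fun r _ => ?_⟩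
    simp [runContractions, filter_eq']
  | cons x l ih =>
    obtain ⟨hxl, hl⟩ := List.nodup_cons.1 hl
    obtain ⟨hleaf, hcf⟩ := List.pairwise_cons.1 hcf
    have hpx : par x ≠ x := hpar x List.mem_cons_self
    obtain ⟨ihpins, ihweights⟩ := ih hl (fun y hy => hpar y (List.mem_cons_of_mem x hy)) hcf
      (contractPins pins x (par x)) (contractWeight c x (par x)) (Function.update rt x x)
      (fun w hw => by
        by_cases hwx : w = x
        · simp [hwx]
        · simp [hwx, hrt₁ w (by simp [hwx, hw])])
      (fun w hw => by
        have hwx : w ≠ x := fun h => hxl (h ▸ hw)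
        rw [Function.update_of_ne hwx, Function.update_of_ne (hleaf w hw)]
        exact hrt₂ w (List.mem_cons_of_mem x hw))
    rw [List.map_cons, runContractions_cons]
    refine ⟨fun e => ?_, fun r hr => ?_⟩
    · rw [ihpins e, ← image_contractPins pins (hrt₂ x List.mem_cons_self) e]
      refine image_congr fun v hv => Function.update_of_ne ?_ _ _
      rintro rfl
      exact notMem_contractPins pins hpx.symm e hv
    · rw [ihweights r fun h => hr (List.mem_cons_of_mem x h)]
      exact sum_fiber_update_contractWeight c rt hpx.symm (hrt₂ x List.mem_cons_self)
        fun h => hr (h ▸ List.mem_cons_self)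

end forest

theorem stmt9_general (E : Finset ι) (pins : ι → Finset V) (c : V → ℝ)
    (D : Finset V) (par : V → V)
    (rt : V → V) (hrt₁ : ∀ w, w ∉ D → rt w = w) (hrt₂ : ∀ w ∈ D, rt w = rt (par w))
    (en : Fin D.card → V) (hen : ∀ i, en i ∈ D) (heninj : Function.Injective en)
    (hcf : ∀ i j : Fin D.card, par (en i) = en j → i < j) :
    (∀ e ∈ E,
      (runContractions pins c ((List.finRange D.card).map (fun i => (en i, par (en i))))).1 e =
        (pins e).image rt) ∧
    (∀ r : V, r ∉ D →
      (runContractions pins c ((List.finRange D.card).map (fun i => (en i, par (en i))))).2 r =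
        ∑ w ∈ Finset.univ.filter (fun w => rt w = r), c w) := by
  have hnodup : (List.ofFn en).Nodup := List.nodup_ofFn.2 heninj
  have hmem : ∀ w, w ∈ List.ofFn en ↔ w ∈ D := by
    suffices h : (List.ofFn en).toFinset = D from fun w => List.mem_toFinset.symm.trans (by rw [h])
    refine eq_of_subset_of_card_le (fun w hw => ?_) ?_
    · obtain ⟨i, rfl⟩ := List.mem_ofFn.1 (List.mem_toFinset.1 hw)
      exact hen i
    · rw [List.toFinset_card_of_nodup hnodup, List.length_ofFn]
  have hseq : (List.finRange D.card).map (fun i => (en i, par (en i))) =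
      (List.ofFn en).map fun x => (x, par x) := by
    rw [List.ofFn_eq_map, List.map_map]
    rfl
  obtain ⟨hpins, hweights⟩ := runContractions_forest par (List.ofFn en) hnodup
    (fun x hx => by
      obtain ⟨i, rfl⟩ := List.mem_ofFn.1 hx
      exact fun h => lt_irrefl i (hcf i i h))
    (List.pairwise_ofFn.2 fun i j hij h => lt_asymm hij (hcf j i h))
    pins c rt (fun w hw => hrt₁ w ((hmem w).not.1 hw)) (fun w hw => hrt₂ w ((hmem w).1 hw))
  rw [hseq]
  exact ⟨fun e _ => hpins e, fun r hr => hweights r ((hmem r).not.2 hr)⟩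

/-- order-independence of forest contractions. Let `F` be a rooted forest on
the node set given by a parent function `par` on `D ⊆ V`, let `rt` be the corresponding root
function (`rt w = w` for roots, `rt w = rt (par w)` for `w ∈ D`), and let `en : Fin |D| → D` be
any children-first enumeration of `D` (every node of `D` appears after all of its children, i.e.
`par (en i) = en j → i < j`; this also encodes acyclicity of the parent relation).
Then contracting `en 0` onto `par (en 0)`, then `en 1` onto `par (en 1)`, … yields the same
weighted hypergraph, namely the contraction of `H` by the clustering given by the trees of `F`:
every net `e ∈ E` becomes its image `rt '' e`, and every root `r ∉ D` gets weight
`Σ_{w : rt w = r} c(w)`. -/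
theorem stmt9 (E : Finset ι) (pins : ι → Finset V) (c : V → ℝ) (ω : ι → ℝ)
    (hne : ∀ e ∈ E, (pins e).Nonempty) (hω : ∀ e ∈ E, 0 < ω e) (hc : ∀ v, 0 < c v)
    (D : Finset V) (par : V → V)
    (rt : V → V) (hrt₁ : ∀ w, w ∉ D → rt w = w) (hrt₂ : ∀ w ∈ D, rt w = rt (par w))
    (en : Fin D.card → V) (hen : ∀ i, en i ∈ D) (heninj : Function.Injective en)
    (hcf : ∀ i j : Fin D.card, par (en i) = en j → i < j) :
    (∀ e ∈ E,
      (runContractions pins c ((List.finRange D.card).map (fun i => (en i, par (en i))))).1 e =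
        (pins e).image rt) ∧
    (∀ r : V, r ∉ D →
      (runContractions pins c ((List.finRange D.card).map (fun i => (en i, par (en i))))).2 r =
        ∑ w ∈ Finset.univ.filter (fun w => rt w = r), c w) :=
  stmt9_general E pins c D par rt hrt₁ hrt₂ en hen heninj hcf
end

section
/- (Step lemma for the adaptive imbalance ratio of recursive bipartitioning.) Let L > 0 be a real number, let k' ≥ 2 be an integer, set k₁ := ⌈k'/2⌉ and r := ⌈log₂ k'⌉, and let w be a real number with 0 < w ≤ L·k'. Define the adapted imbalance ratio ε' := (L·k'/w)^{1/r} − 1. Then for every real w₁ with 0 < w₁ ≤ (1 + ε')·(k₁/k')·w, it holds that w₁ ≤ L·k₁. -/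
/-! Since `w ≤ L·k'`, the base `L·k'/w` is at least `1`, so raising it to the power `1/r ≤ 1`
can only shrink it: `1 + ε' ≤ L·k'/w`. Hence `(1 + ε')·(k₁/k')·w ≤ (L·k'/w)·(k₁/k')·w = L·k₁`. -/

theorem Real.rpow_one_div_natCast_le_self {x : ℝ} (hx : 1 ≤ x) (r : ℕ) :
    x ^ ((1 : ℝ) / r) ≤ x :=
  Real.rpow_le_self_of_one_le hx (one_div (r : ℝ) ▸ Nat.cast_inv_le_one r)

theorem stmt10_general (L : ℝ) (k' : ℕ)
    (w : ℝ) (hw : 0 < w) (hwle : w ≤ L * k') :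
    ∀ w₁ : ℝ, 0 < w₁ →
      w₁ ≤ (1 + ((L * k' / w) ^ ((1 : ℝ) / (Nat.clog 2 k' : ℝ)) - 1)) *
            (((k' + 1) / 2 : ℕ) : ℝ) / (k' : ℝ) * w →
      w₁ ≤ L * (((k' + 1) / 2 : ℕ) : ℝ) := by
  intro w₁ _ hw₁
  have hk' : (k' : ℝ) ≠ 0 := by
    rintro hk'
    rw [hk', mul_zero] at hwle
    exact hw.not_ge hwle
  have hbase : 1 ≤ L * k' / w := (one_le_div hw).2 hwle
  rw [add_sub_cancel] at hw₁
  calc w₁ ≤ _ := hw₁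
    _ ≤ L * k' / w * ((k' + 1) / 2 : ℕ) / k' * w := by
      gcongr
      exact Real.rpow_one_div_natCast_le_self hbase _
    _ = L * ((k' + 1) / 2 : ℕ) := by field_simp

/-- step lemma for the adaptive imbalance ratio of recursive bipartitioning.
Let `L > 0`, `k' ≥ 2` an integer, `k₁ = ⌈k'/2⌉`, `r = ⌈log₂ k'⌉`, and `0 < w ≤ L·k'`.
With the adapted imbalance ratio `ε' = (L·k'/w)^(1/r) − 1`, every `w₁` with
`0 < w₁ ≤ (1 + ε')·(k₁/k')·w` satisfies `w₁ ≤ L·k₁`. -/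
theorem stmt10 (L : ℝ) (hL : 0 < L) (k' : ℕ) (hk : 2 ≤ k')
    (w : ℝ) (hw : 0 < w) (hwle : w ≤ L * k') :
    ∀ w₁ : ℝ, 0 < w₁ →
      w₁ ≤ (1 + ((L * k' / w) ^ ((1 : ℝ) / (Nat.clog 2 k' : ℝ)) - 1)) *
            (((k' + 1) / 2 : ℕ) : ℝ) / (k' : ℝ) * w →
      w₁ ≤ L * (((k' + 1) / 2 : ℕ) : ℝ) :=
  stmt10_general L k' w hw hwle
end

section
/- (Balance guarantee of recursive bipartitioning for powers of two.) Let W > 0, ε > 0 be real numbers, let k = 2^d with d ≥ 0, and set L := (1 + ε)·⌈W/k⌉. For w > 0 and j ≥ 1 define ε'(w, 2^j) := (L·2^j/w)^{1/j} − 1. Define inductively a set R ⊆ ℝ_{>0} × ℕ by: (W, k) ∈ R; and whenever (w, 2^j) ∈ R with j ≥ 1 and w₁, w₂ > 0 satisfy w₁ + w₂ = w, w₁ ≤ (1 + ε'(w, 2^j))·w/2 and w₂ ≤ (1 + ε'(w, 2^j))·w/2, then (w₁, 2^{j−1}) ∈ R and (w₂, 2^{j−1}) ∈ R. Then every pair (w,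 1) ∈ R satisfies w ≤ (1 + ε)·⌈W/k⌉; that is, if every bipartition in the recursion is ε'-balanced with the adapted imbalance ratio, the final k-way partition is ε-balanced. -/
/-- The target maximum block weight `L = (1 + ε)·⌈W/k⌉` for `k = 2^d`. -/
noncomputable def Ltarget (W ε : ℝ) (d : ℕ) : ℝ :=
  (1 + ε) * ((⌈W / (2 ^ d : ℝ)⌉ : ℤ) : ℝ)

/-- The adapted imbalance ratio `ε'(w, 2^j) = (L·2^j/w)^(1/j) − 1`. -/
noncomputable def epsAdapt (L w : ℝ) (j : ℕ) : ℝ :=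
  (L * 2 ^ j / w) ^ ((1 : ℝ) / (j : ℝ)) - 1

/-- The inductively defined set `R` of pairs `(w, 2^j)` reachable by recursive bipartitioning
where each bipartition is `ε'`-balanced with the adapted imbalance ratio: `(W, 2^d) ∈ R`, and
whenever `(w, 2^(j+1)) ∈ R` and `w₁, w₂ > 0` with `w₁ + w₂ = w` and
`w₁, w₂ ≤ (1 + ε'(w, 2^(j+1)))·w/2`, then `(w₁, 2^j) ∈ R` and `(w₂, 2^j) ∈ R`. -/
inductive RBReach (W ε : ℝ) (d : ℕ) : ℝ → ℕ → Prop
  | base : RBReach W ε d W d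
  | left {w w₁ w₂ : ℝ} {j : ℕ} :
      RBReach W ε d w (j + 1) → 0 < w₁ → 0 < w₂ → w₁ + w₂ = w →
      w₁ ≤ (1 + epsAdapt (Ltarget W ε d) w (j + 1)) * w / 2 →
      w₂ ≤ (1 + epsAdapt (Ltarget W ε d) w (j + 1)) * w / 2 →
      RBReach W ε d w₁ j
  | right {w w₁ w₂ : ℝ} {j : ℕ} :
      RBReach W ε d w (j + 1) → 0 < w₁ → 0 < w₂ → w₁ + w₂ = w →
      w₁ ≤ (1 + epsAdapt (Ltarget W ε d) w (j + 1)) * w / 2 →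
      w₂ ≤ (1 + epsAdapt (Ltarget W ε d) w (j + 1)) * w / 2 →
      RBReach W ε d w₂ j

/-- Halving step: if the parent weight satisfies `w ≤ L·2^(j+1)` and a child weight is at most
`(1 + ε'(w, 2^(j+1)))·w/2`, then the child weight is at most `L·2^j`. -/
lemma rb_step (W ε : ℝ) (d j : ℕ) (w : ℝ)
    (hw : 0 < w) (hwle : w ≤ Ltarget W ε d * 2 ^ (j + 1))
    (w₁ : ℝ)
    (h1 : w₁ ≤ (1 + epsAdapt (Ltarget W ε d) w (j + 1)) * w / 2) :
    w₁ ≤ Ltarget W ε d * 2 ^ j := by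
  set L := Ltarget W ε d with hL
  have hx : (1:ℝ) ≤ L * 2 ^ (j+1) / w := (one_le_div hw).2 hwle
  have hexp : (1:ℝ) / ((j+1 : ℕ) : ℝ) ≤ 1 := by
    rw [div_le_one (by positivity)]
    exact_mod_cast Nat.one_le_iff_ne_zero.2 (Nat.succ_ne_zero j)
  have hpow : (L * 2 ^ (j+1) / w) ^ ((1:ℝ) / ((j+1:ℕ) : ℝ)) ≤ L * 2 ^ (j+1) / w := by
    calc (L * 2 ^ (j+1) / w) ^ ((1:ℝ) / ((j+1:ℕ) : ℝ))
        ≤ (L * 2 ^ (j+1) / w) ^ (1:ℝ) := Real.rpow_le_rpow_of_exponent_le hx hexp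
      _ = L * 2 ^ (j+1) / w := Real.rpow_one _
  have : (1 + epsAdapt L w (j + 1)) * w / 2 ≤ (L * 2 ^ (j+1) / w) * w / 2 := by
    unfold epsAdapt
    have := mul_le_mul_of_nonneg_right hpow hw.le
    push_cast at this ⊢
    linarith
  have h2 : (L * 2 ^ (j+1) / w) * w / 2 = L * 2 ^ j := by
    field_simp
    ring
  linarith

/-- Invariant: every reachable pair `(w, 2^j)` satisfies `0 < w` and `w ≤ L·2^j`. -/
lemma rb_invariant (W ε : ℝ) (hW : 0 < W) (hε : 0 < ε) (d : ℕ) (w : ℝ) (j : ℕ)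
    (h : RBReach W ε d w j) : 0 < w ∧ w ≤ Ltarget W ε d * 2 ^ j := by
  induction h with
  | base =>
    refine ⟨hW, ?_⟩
    have hceil : W / (2 ^ d : ℝ) ≤ ((⌈W / (2 ^ d : ℝ)⌉ : ℤ) : ℝ) := Int.le_ceil _
    have h2 : (0:ℝ) < 2 ^ d := by positivity
    have : W ≤ ((⌈W / (2 ^ d : ℝ)⌉ : ℤ) : ℝ) * 2 ^ d := by
      rw [← div_le_iff₀ h2] at *
      linarith
    have hc : (0:ℝ) ≤ ((⌈W / (2 ^ d : ℝ)⌉ : ℤ) : ℝ) * 2 ^ d := le_trans hW.le this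
    unfold Ltarget
    nlinarith
  | left _ hw₁ hw₂ hsum h1 h2 ih =>
    exact ⟨hw₁, rb_step W ε d _ _ ih.1 ih.2 _ h1⟩
  | right _ hw₁ hw₂ hsum h1 h2 ih =>
    exact ⟨hw₂, rb_step W ε d _ _ ih.1 ih.2 _ h2⟩

/-- balance guarantee of recursive bipartitioning for powers of two.
If every bipartition in the recursion is `ε'`-balanced with the adapted imbalance ratio, then
every final part `(w, 1) ∈ R` satisfies `w ≤ (1 + ε)·⌈W/k⌉`, i.e., the final `k`-way partition
is `ε`-balanced. -/
theorem stmt11 (W ε : ℝ) (hW : 0 < W) (hε : 0 < ε) (d : ℕ) (w : ℝ)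
    (h : RBReach W ε d w 0) :
    w ≤ (1 + ε) * ((⌈W / (2 ^ d : ℝ)⌉ : ℤ) : ℝ) := by
  have := (rb_invariant W ε hW hε d w 0 h).2
  simpa [Ltarget] using this
end
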